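/- arXiv:1911.12281 — 4 statements merged into one kernel-verified Lean document; each statement's English description precedes it below -/
import Mathlib

section
/- Let r ≥ 1 be an integer. There exists a Lie algebra homomorphism σ : t^R(r) → t^R(r) such that σ(t_{ij}) = t_{ij} for all 2 ≤ i, j ≤ r, σ(t_{1i}) = σ(t_{i1}) = − Σ_{k=1}^r t_{ki} for all 2 ≤ i ≤ r, and σ(t_{11}) = Σ_{k=1}^r Σ_{l=1}^r t_{kl}. (Equivalently, this assignment on the generators of the free Lie algebra maps the defining relation ideal of t^R(r) into itself.) -/
/-- The set of defining relations of the ribbon braid Drinfeld–Kohno Lie algebra `t^R(r)`: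
symmetry `t_{ij} - t_{ji}`, commutation `[t_{ij}, t_{kl}]` for `{i,j} ∩ {k,l} = ∅`, and
`[t_{ij}, t_{ki} + t_{kj}]`. -/
def tRRel (r : ℕ) : Set (FreeLieAlgebra ℚ (Fin r × Fin r)) :=
  { x | (∃ i j : Fin r, x = FreeLieAlgebra.of ℚ (i, j) - FreeLieAlgebra.of ℚ (j, i)) ∨
        (∃ i j k l : Fin r, ({i, j} : Set (Fin r)) ∩ {k, l} = ∅ ∧
          x = ⁅FreeLieAlgebra.of ℚ (i, j), FreeLieAlgebra.of ℚ (k, l)⁆) ∨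
        (∃ i j k : Fin r,
          x = ⁅FreeLieAlgebra.of ℚ (i, j),
                FreeLieAlgebra.of ℚ (k, i) + FreeLieAlgebra.of ℚ (k, j)⁆) }

/-- The Lie ideal generated by the defining relations. -/
noncomputable def tRIdeal (r : ℕ) : LieIdeal ℚ (FreeLieAlgebra ℚ (Fin r × Fin r)) :=
  LieSubmodule.lieSpan ℚ (FreeLieAlgebra ℚ (Fin r × Fin r)) (tRRel r)

/-- The ribbon braid Drinfeld–Kohno Lie algebra `t^R(r)`. -/
abbrev tR (r : ℕ) :=
  FreeLieAlgebra ℚ (Fin r × Fin r) ⧸ tRIdeal r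

/-- The generator `t_{ij}` of `t^R(r)`. -/
noncomputable def tGen (r : ℕ) (i j : Fin r) : tR r :=
  LieSubmodule.Quotient.mk (N := tRIdeal r) (FreeLieAlgebra.of ℚ (i, j))

/-! The map is checked on generators: writing `c_j = ∑_k t_{kj}` for the column sums and
`T = ∑_j c_j`, every `t_{kl}` commutes with `c_k + c_l` and with every `c_n`, `n ∉ {k, l}`;
hence `T` is central, and `[c_j, c_k] = [c_j, t_{kj}]`.  These identities are exactly what the
relations of the replaced generators `t_{1j} ↦ -c_j`, `t_{11} ↦ T` require. -/

namespace LieIdeal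

variable {R L L' : Type*} [CommRing R] [LieRing L] [LieAlgebra R L] [LieRing L']
  [LieAlgebra R L']

def liftQ (I : LieIdeal R L) (f : L →ₗ⁅R⁆ L') (h : I ≤ f.ker) : L ⧸ I →ₗ⁅R⁆ L' where
  toLinearMap := (I : Submodule R L).liftQ f fun x hx => LieHom.mem_ker.mp (h hx)
  map_lie' {x y} := by
    obtain ⟨a, rfl⟩ := LieSubmodule.Quotient.surjective_mk' I x
    obtain ⟨b, rfl⟩ := LieSubmodule.Quotient.surjective_mk' I y
    exact f.map_lie a b

@[simp]
theorem liftQ_mk (I : LieIdeal R L) (f : L →ₗ⁅R⁆ L') (h : I ≤ f.ker) (x : L) :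
    liftQ I f h (LieSubmodule.Quotient.mk x) = f x :=
  rfl

end LieIdeal

variable {L : Type*} [LieRing L] {r : ℕ}

structure TRRelations (t : Fin r → Fin r → L) : Prop where
  symm (i j : Fin r) : t i j = t j i
  lie_eq_zero_of_ne {i j k l : Fin r} :
    i ≠ k → i ≠ l → j ≠ k → j ≠ l → ⁅t i j, t k l⁆ = 0
  lie_add_eq_zero (i j k : Fin r) : ⁅t i j, t k i + t k j⁆ = 0

theorem tRRelations_tGen : TRRelations (tGen r) := by
  have rel_zero {x} (hx : x ∈ tRRel r) : LieSubmodule.Quotient.mk (N := tRIdeal r) x = 0 :=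
    LieSubmodule.Quotient.mk_eq_zero'.mpr (LieSubmodule.subset_lieSpan hx)
  refine ⟨fun i j => sub_eq_zero.mp (rel_zero (Or.inl ⟨i, j, rfl⟩)),
    fun {i j k l} hik hil hjk hjl => rel_zero (Or.inr (Or.inl ⟨i, j, k, l, ?_, rfl⟩)),
    fun i j k => rel_zero (Or.inr (Or.inr ⟨i, j, k, rfl⟩))⟩
  ext x
  simp only [Set.mem_inter_iff, Set.mem_insert_iff, Set.mem_singleton_iff,
    Set.mem_empty_iff_false, iff_false, not_and]
  rintro (rfl | rfl) <;> rintro (rfl | rfl) <;> simp_all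

theorem TRRelations.exists_lieHom [LieAlgebra ℚ L] {t : Fin r → Fin r → L}
    (ht : TRRelations t) : ∃ σ : tR r →ₗ⁅ℚ⁆ L, ∀ i j, σ (tGen r i j) = t i j := by
  let f := FreeLieAlgebra.lift ℚ fun p : Fin r × Fin r => t p.1 p.2
  have hf (i j : Fin r) : f (FreeLieAlgebra.of ℚ (i, j)) = t i j :=
    FreeLieAlgebra.lift_of_apply _ _
  have hker : tRIdeal r ≤ f.ker := by
    refine LieSubmodule.lieSpan_le.mpr ?_
    rintro x (⟨i, j, rfl⟩ | ⟨i, j, k, l, hdisj, rfl⟩ | ⟨i, j, k, rfl⟩) <;>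
      simp only [SetLike.mem_coe, LieHom.mem_ker, map_sub, map_add, LieHom.map_lie, hf]
    · exact sub_eq_zero.mpr (ht.symm i j)
    · have hne {a b} (ha : a ∈ ({i, j} : Set (Fin r))) (hb : b ∈ ({k, l} : Set (Fin r))) :
          a ≠ b := by
        rintro rfl
        exact (Set.eq_empty_iff_forall_notMem.mp hdisj) a ⟨ha, hb⟩
      exact ht.lie_eq_zero_of_ne (hne (.inl rfl) (.inl rfl)) (hne (.inl rfl) (.inr rfl))
        (hne (.inr rfl) (.inl rfl)) (hne (.inr rfl) (.inr rfl))
    · exact ht.lie_add_eq_zero i j k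
  exact ⟨LieIdeal.liftQ _ f hker, fun i j => (LieIdeal.liftQ_mk _ f hker _).trans (hf i j)⟩

def colSum (t : Fin r → Fin r → L) (j : Fin r) : L := ∑ k, t k j

namespace TRRelations

variable {t : Fin r → Fin r → L} (ht : TRRelations t)
include ht

theorem lie_diag (k m : Fin r) : ⁅t m k, t k k⁆ = 0 := by
  have h := ht.lie_add_eq_zero m k k
  rwa [← ht.symm m k, lie_add, lie_self, zero_add] at h

theorem lie_colSum_of_ne {k l n : Fin r} (hk : n ≠ k) (hl : n ≠ l) :
    ⁅t k l, colSum t n⁆ = 0 := by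
  rw [colSum, lie_sum, ← Finset.sum_subset (Finset.subset_univ {k, l}) fun m _ hm => by
    simp only [Finset.mem_insert, Finset.mem_singleton, not_or] at hm
    exact ht.lie_eq_zero_of_ne (Ne.symm hm.1) hk.symm (Ne.symm hm.2) hl.symm]
  obtain rfl | hkl := eq_or_ne k l
  · rw [Finset.pair_eq_singleton, Finset.sum_singleton, ← lie_skew, ht.symm k n, ht.lie_diag,
      neg_zero]
  · rw [Finset.sum_pair hkl, ← lie_add, ht.symm k n, ht.symm l n, ht.lie_add_eq_zero]

theorem lie_colSum_add_colSum (k l : Fin r) : ⁅t k l, colSum t k + colSum t l⁆ = 0 := by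
  rw [colSum, colSum, ← Finset.sum_add_distrib, lie_sum]
  exact Finset.sum_eq_zero fun m _ => ht.lie_add_eq_zero k l m

theorem lie_colSum_self (k : Fin r) : ⁅t k k, colSum t k⁆ = 0 := by
  rw [colSum, lie_sum]
  exact Finset.sum_eq_zero fun m _ => by rw [← lie_skew, ht.lie_diag, neg_zero]

theorem colSum_lie_colSum (j k : Fin r) :
    ⁅colSum t j, colSum t k⁆ = ⁅colSum t j, t k j⁆ := by
  obtain rfl | hjk := eq_or_ne j k
  · rw [lie_self, ← lie_skew, ht.lie_colSum_self, neg_zero]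
  · rw [show colSum t k = ∑ m, t m k from rfl, lie_sum, Finset.sum_eq_single j (fun m _ hm => by
        rw [← lie_skew, ht.lie_colSum_of_ne (Ne.symm hm) hjk, neg_zero])
      (absurd (Finset.mem_univ j)), ht.symm j k]

theorem lie_sum_colSum (k l : Fin r) : ⁅t k l, ∑ n, colSum t n⁆ = 0 := by
  rw [lie_sum, ← Finset.sum_subset (Finset.subset_univ {k, l}) fun n _ hn => by
    simp only [Finset.mem_insert, Finset.mem_singleton, not_or] at hn
    exact ht.lie_colSum_of_ne hn.1 hn.2]
  obtain rfl | hkl := eq_or_ne k l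
  · rw [Finset.pair_eq_singleton, Finset.sum_singleton, ht.lie_colSum_self]
  · rw [Finset.sum_pair hkl, ← lie_add, ht.lie_colSum_add_colSum]

theorem colSum_lie_sum_colSum (k : Fin r) : ⁅colSum t k, ∑ n, colSum t n⁆ = 0 := by
  rw [colSum, sum_lie]
  exact Finset.sum_eq_zero fun m _ => ht.lie_sum_colSum m k

end TRRelations

/-- The images of the generators under the cyclic structure map, with `z` as the index `1`. -/
def cyclicTwist (t : Fin r → Fin r → L) (z : Fin r) (i j : Fin r) : L :=
  if i = z then (if j = z then ∑ n, colSum t n else -colSum t j)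
  else if j = z then -colSum t i else t i j

section cyclicTwist

variable {t : Fin r → Fin r → L} (z : Fin r)

theorem cyclicTwist_self : cyclicTwist t z z z = ∑ n, colSum t n := by
  simp [cyclicTwist]

theorem cyclicTwist_left {j : Fin r} (hj : j ≠ z) : cyclicTwist t z z j = -colSum t j := by
  simp [cyclicTwist, hj]

theorem cyclicTwist_right {i : Fin r} (hi : i ≠ z) : cyclicTwist t z i z = -colSum t i := by
  simp [cyclicTwist, hi]

theorem cyclicTwist_of_ne {i j : Fin r} (hi : i ≠ z) (hj : j ≠ z) :
    cyclicTwist t z i j = t i j := by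
  simp [cyclicTwist, hi, hj]

theorem cyclicTwist_symm (i j : Fin r) (hsymm : t i j = t j i) :
    cyclicTwist t z i j = cyclicTwist t z j i := by
  by_cases hi : i = z <;> by_cases hj : j = z <;> simp [cyclicTwist, hi, hj, hsymm]

end cyclicTwist

namespace TRRelations

variable {t : Fin r → Fin r → L} (ht : TRRelations t) (z : Fin r)
include ht

theorem lie_cyclicTwist_eq_zero_of_ne {i j k l : Fin r} (hik : i ≠ k) (hil : i ≠ l)
    (hjk : j ≠ k) (hjl : j ≠ l) : ⁅t k l, cyclicTwist t z i j⁆ = 0 := by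
  by_cases hi : i = z <;> by_cases hj : j = z
  · rw [hi, hj, cyclicTwist_self, ht.lie_sum_colSum]
  · rw [hi, cyclicTwist_left z hj, lie_neg, ht.lie_colSum_of_ne hjk hjl, neg_zero]
  · rw [hj, cyclicTwist_right z hi, lie_neg, ht.lie_colSum_of_ne hik hil, neg_zero]
  · rw [cyclicTwist_of_ne z hi hj]
    exact ht.lie_eq_zero_of_ne hik.symm hjk.symm hil.symm hjl.symm

theorem lie_cyclicTwist_eq_zero {i j k l : Fin r} (hik : i ≠ k) (hil : i ≠ l) (hjk : j ≠ k)
    (hjl : j ≠ l) : ⁅cyclicTwist t z i j, cyclicTwist t z k l⁆ = 0 := by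
  by_cases hkl : k ≠ z ∧ l ≠ z
  · rw [cyclicTwist_of_ne z hkl.1 hkl.2, ← lie_skew,
      ht.lie_cyclicTwist_eq_zero_of_ne z hik hil hjk hjl, neg_zero]
  · have hij : i ≠ z ∧ j ≠ z := by grind
    rw [cyclicTwist_of_ne z hij.1 hij.2,
      ht.lie_cyclicTwist_eq_zero_of_ne z hik.symm hjk.symm hil.symm hjl.symm]

theorem lie_cyclicTwist_add_eq_zero (i j k : Fin r) :
    ⁅cyclicTwist t z i j, cyclicTwist t z k i + cyclicTwist t z k j⁆ = 0 := by
  have central (n : Fin r) : ⁅colSum t n, ∑ m, colSum t m⁆ = 0 := ht.colSum_lie_sum_colSum n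
  by_cases hi : i = z <;> by_cases hj : j = z <;> by_cases hk : k = z
  · rw [hi, hj, hk, cyclicTwist_self, lie_add, lie_self, add_zero]
  · rw [hi, hj, cyclicTwist_self, cyclicTwist_right z hk, lie_add, lie_neg, ← lie_skew, central,
      neg_zero, neg_zero, add_zero]
  · rw [hi, hk, cyclicTwist_left z hj, cyclicTwist_self, lie_add, lie_self, add_zero, neg_lie,
      central, neg_zero]
  · rw [hi, cyclicTwist_left z hj, cyclicTwist_right z hk, cyclicTwist_of_ne z hk hj, lie_add,
      neg_lie, neg_lie, lie_neg, neg_neg, ht.colSum_lie_colSum, add_neg_cancel]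
  · rw [hj, hk, cyclicTwist_right z hi, cyclicTwist_left z hi, cyclicTwist_self, lie_add,
      lie_self, zero_add, neg_lie, central, neg_zero]
  · rw [hj, cyclicTwist_right z hi, cyclicTwist_of_ne z hk hi, cyclicTwist_right z hk, lie_add,
      neg_lie, neg_lie, lie_neg, neg_neg, ht.colSum_lie_colSum, neg_add_cancel]
  · rw [hk, cyclicTwist_of_ne z hi hj, cyclicTwist_left z hi, cyclicTwist_left z hj, ← neg_add,
      lie_neg, ht.lie_colSum_add_colSum, neg_zero]
  · rw [cyclicTwist_of_ne z hi hj, cyclicTwist_of_ne z hk hi, cyclicTwist_of_ne z hk hj,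
      ht.lie_add_eq_zero]

protected theorem cyclicTwist : TRRelations (cyclicTwist t z) where
  symm i j := cyclicTwist_symm z i j (ht.symm i j)
  lie_eq_zero_of_ne := ht.lie_cyclicTwist_eq_zero z
  lie_add_eq_zero := ht.lie_cyclicTwist_add_eq_zero z

end TRRelations

/-- There is a Lie algebra homomorphism `σ : t^R(r) → t^R(r)` with
`σ(t_{ij}) = t_{ij}` for `i, j ≥ 2`, `σ(t_{1i}) = σ(t_{i1}) = -Σ_k t_{ki}` for `i ≥ 2`,
and `σ(t_{11}) = Σ_k Σ_l t_{kl}`.  (The index `1` is represented by `⟨0, hr⟩ : Fin r`.) -/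
theorem exists_cyclic_structure_map (r : ℕ) (hr : 1 ≤ r) :
    ∃ σ : tR r →ₗ⁅ℚ⁆ tR r,
      (∀ i j : Fin r, i ≠ ⟨0, hr⟩ → j ≠ ⟨0, hr⟩ → σ (tGen r i j) = tGen r i j) ∧
      (∀ i : Fin r, i ≠ ⟨0, hr⟩ →
        σ (tGen r ⟨0, hr⟩ i) = -∑ k : Fin r, tGen r k i ∧
        σ (tGen r i ⟨0, hr⟩) = -∑ k : Fin r, tGen r k i) ∧
      σ (tGen r ⟨0, hr⟩ ⟨0, hr⟩) = ∑ k : Fin r, ∑ l : Fin r, tGen r k l := by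
  obtain ⟨σ, hσ⟩ := (tRRelations_tGen.cyclicTwist ⟨0, hr⟩).exists_lieHom
  refine ⟨σ, fun i j hi hj => ?_, fun i hi => ⟨?_, ?_⟩, ?_⟩ <;> rw [hσ]
  · exact cyclicTwist_of_ne _ hi hj
  · exact cyclicTwist_left _ hi
  · exact cyclicTwist_right _ hi
  · rw [cyclicTwist_self]
    exact Finset.sum_comm
end

section
/- Let r ≥ 1 be an integer and let σ : t^R(r) → t^R(r) be the Lie algebra homomorphism determined by σ(t_{ij}) = t_{ij} for 2 ≤ i, j ≤ r, σ(t_{1i}) = σ(t_{i1}) = − Σ_{k=1}^r t_{ki} for 2 ≤ i ≤ r, and σ(t_{11}) = Σ_{k=1}^r Σ_{l=1}^r t_{kl}. Then σ ∘ σ = id; in particular σ is a Lie algebra automorphism of t^R(r). -/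
/-!
`σ ∘ σ` is a Lie algebra endomorphism of `t^R(r)`, so it suffices that it fixes every generator
`t_{ij}`. This is a computation in the additive group spanned by the `t_{ij}` that only uses their
symmetry: the column sums `c_j = Σ_k t_{kj}` satisfy `σ(c_j) = -t_{1j}` for `j ≠ 1` and
`σ(c_1) = c_1`, and `σ(t_{1j})`, `σ(t_{11})` are `-c_j` and `Σ_j c_j`.
-/

namespace LieIdeal

variable {R L L' : Type*} [CommRing R] [LieRing L] [LieAlgebra R L] [LieRing L'] [LieAlgebra R L']

def mkLieHom (I : LieIdeal R L) : L →ₗ⁅R⁆ L ⧸ I :=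
  { (LieSubmodule.Quotient.mk' I : L →ₗ[R] L ⧸ I) with map_lie' := rfl }

lemma quotient_lieHom_ext {I : LieIdeal R L} {f g : L ⧸ I →ₗ⁅R⁆ L'}
    (h : f.comp I.mkLieHom = g.comp I.mkLieHom) : f = g := by
  ext x
  obtain ⟨y, rfl⟩ := LieSubmodule.Quotient.surjective_mk' I x
  exact LieHom.congr_fun h y

end LieIdeal

lemma tGen_symm (r : ℕ) (i j : Fin r) : tGen r i j = tGen r j i := by
  rw [← sub_eq_zero]
  exact (LieSubmodule.Quotient.mk_eq_zero' (N := tRIdeal r)).2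
    (LieSubmodule.subset_lieSpan (Or.inl ⟨i, j, rfl⟩))

lemma tR.lieHom_ext {L : Type*} [LieRing L] [LieAlgebra ℚ L] {r : ℕ} {f g : tR r →ₗ⁅ℚ⁆ L}
    (h : ∀ i j, f (tGen r i j) = g (tGen r i j)) : f = g :=
  LieIdeal.quotient_lieHom_ext <| FreeLieAlgebra.hom_ext fun p => h p.1 p.2

section SymmetricArray

open Finset

variable {M ι F : Type*} [AddCommGroup M] [Fintype ι] [DecidableEq ι]
  [FunLike F M M] [AddMonoidHomClass F M M] {σ : F} {t : ι → ι → M} {z : ι}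

lemma map_sum_col_of_ne
    (hfix : ∀ i j, i ≠ z → j ≠ z → σ (t i j) = t i j)
    (hrow : ∀ j, j ≠ z → σ (t z j) = -∑ k, t k j) {j : ι} (hj : j ≠ z) :
    σ (∑ k, t k j) = -t z j := by
  rw [map_sum, ← add_sum_erase _ _ (mem_univ z), hrow j hj,
    sum_congr rfl fun k hk => hfix k j (ne_of_mem_erase hk) hj,
    ← add_sum_erase _ (t · j) (mem_univ z)]
  abel

lemma map_sum_col_self (hsymm : ∀ i j, t i j = t j i)
    (hrow : ∀ j, j ≠ z → σ (t z j) = -∑ k, t k j)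
    (hcorner : σ (t z z) = ∑ k, ∑ l, t k l) :
    σ (∑ k, t k z) = ∑ k, t k z := by
  have hcol : ∀ k ∈ univ.erase z, σ (t k z) = -∑ m, t m k := fun k hk => by
    rw [hsymm, hrow k (ne_of_mem_erase hk)]
  rw [map_sum, ← add_sum_erase _ _ (mem_univ z), hcorner, sum_congr rfl hcol, sum_comm,
    ← add_sum_erase _ (fun l => ∑ k, t k l) (mem_univ z), sum_neg_distrib]
  abel

lemma map_map_eq_self (hsymm : ∀ i j, t i j = t j i)
    (hfix : ∀ i j, i ≠ z → j ≠ z → σ (t i j) = t i j)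
    (hrow : ∀ j, j ≠ z → σ (t z j) = -∑ k, t k j)
    (hcorner : σ (t z z) = ∑ k, ∑ l, t k l) (i j : ι) :
    σ (σ (t i j)) = t i j := by
  have hrow_inv : ∀ j, σ (σ (t z j)) = t z j := by
    intro j
    by_cases hj : j = z
    · subst hj
      rw [hcorner, sum_comm, map_sum, ← add_sum_erase _ _ (mem_univ j),
        map_sum_col_self hsymm hrow hcorner,
        sum_congr rfl fun l hl => map_sum_col_of_ne hfix hrow (ne_of_mem_erase hl),
        ← add_sum_erase _ (t · j) (mem_univ j), sum_neg_distrib,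
        sum_congr rfl fun l _ => hsymm l j]
      abel
    · rw [hrow j hj, map_neg, map_sum_col_of_ne hfix hrow hj, neg_neg]
  by_cases hi : i = z
  · subst hi; exact hrow_inv j
  by_cases hj : j = z
  · subst hj; rw [hsymm]; exact hrow_inv i
  rw [hfix i j hi hj, hfix i j hi hj]

end SymmetricArray

/-- If `σ : t^R(r) → t^R(r)` is the Lie algebra homomorphism determined by
`σ(t_{ij}) = t_{ij}` for `i, j ≥ 2`, `σ(t_{1i}) = σ(t_{i1}) = -Σ_k t_{ki}` for `i ≥ 2`,
and `σ(t_{11}) = Σ_k Σ_l t_{kl}`, then `σ ∘ σ = id`; in particular `σ` is a Lie algebra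
automorphism of `t^R(r)`.  (The index `1` is represented by `⟨0, hr⟩ : Fin r`.) -/
theorem cyclic_structure_map_involutive (r : ℕ) (hr : 1 ≤ r) (σ : tR r →ₗ⁅ℚ⁆ tR r)
    (h1 : ∀ i j : Fin r, i ≠ ⟨0, hr⟩ → j ≠ ⟨0, hr⟩ → σ (tGen r i j) = tGen r i j)
    (h2 : ∀ i : Fin r, i ≠ ⟨0, hr⟩ →
      σ (tGen r ⟨0, hr⟩ i) = -∑ k : Fin r, tGen r k i ∧
      σ (tGen r i ⟨0, hr⟩) = -∑ k : Fin r, tGen r k i)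
    (h3 : σ (tGen r ⟨0, hr⟩ ⟨0, hr⟩) = ∑ k : Fin r, ∑ l : Fin r, tGen r k l) :
    (∀ x : tR r, σ (σ x) = x) ∧ Function.Bijective σ := by
  have hσσ : σ.comp σ = LieHom.id :=
    tR.lieHom_ext fun i j =>
      map_map_eq_self (tGen_symm r) h1 (fun j hj => (h2 j hj).1) h3 i j
  have hinv : Function.Involutive σ := LieHom.congr_fun hσσ
  exact ⟨hinv, hinv.bijective⟩
end

section
/- Let r ≥ 1 be an integer and let i ≠ k be indices in {1, …, r}. Then in the ribbon braid Drinfeld–Kohno Lie algebra t^R(r) one has [ Σ_{m=1}^r t_{mi} , Σ_{m=1}^r t_{mk} − t_{ki} ] = 0. -/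
/-
Write `s_i = ∑_m t_{mi}` for the `i`-th column sum. It commutes with every `t_{ab}`
with `i ∉ {a, b}`: the terms with `m ∉ {a, b}` vanish by the disjointness relation, and what is
left is `[t_{ai} + t_{bi}, t_{ab}]`, a (symmetrized) instance of the third relation (for `a = b`
one gets `2 [t_{ai}, t_{aa}] = 0` and divides by `2`). Hence in `[s_i, ∑_n t_{nk}]` only the term
`n = i` survives, and it equals `[s_i, t_{ik}] = [s_i, t_{ki}]`.
-/

section

variable {r : ℕ}

lemma mk_eq_zero_of_mem_tRRel {x : FreeLieAlgebra ℚ (Fin r × Fin r)} (hx : x ∈ tRRel r) :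
    LieSubmodule.Quotient.mk (N := tRIdeal r) x = 0 :=
  LieSubmodule.Quotient.mk_eq_zero'.mpr (LieSubmodule.subset_lieSpan hx)

lemma tGen_comm (i j : Fin r) : tGen r i j = tGen r j i :=
  sub_eq_zero.mp (mk_eq_zero_of_mem_tRRel (Or.inl ⟨i, j, rfl⟩))

lemma lie_tGen_tGen_of_ne {i j k l : Fin r} (hik : i ≠ k) (hil : i ≠ l) (hjk : j ≠ k)
    (hjl : j ≠ l) : ⁅tGen r i j, tGen r k l⁆ = 0 := by
  have hdisj : ({i, j} : Set (Fin r)) ∩ {k, l} = ∅ := by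
    ext x
    simp only [Set.mem_inter_iff, Set.mem_insert_iff, Set.mem_singleton_iff,
      Set.mem_empty_iff_false, iff_false, not_and]
    rintro (rfl | rfl) <;> simp [*]
  exact mk_eq_zero_of_mem_tRRel (Or.inr (Or.inl ⟨i, j, k, l, hdisj, rfl⟩))

lemma lie_tGen_tGen_add_tGen (i j k : Fin r) : ⁅tGen r i j, tGen r k i + tGen r k j⁆ = 0 :=
  mk_eq_zero_of_mem_tRRel (Or.inr (Or.inr ⟨i, j, k, rfl⟩))

lemma lie_tGen_add_tGen_tGen (a b m : Fin r) : ⁅tGen r a m + tGen r b m, tGen r a b⁆ = 0 := by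
  rw [← lie_skew, tGen_comm a m, tGen_comm b m, lie_tGen_tGen_add_tGen, neg_zero]

lemma lie_sum_tGen_tGen_of_ne {i a b : Fin r} (hia : i ≠ a) (hib : i ≠ b) :
    ⁅∑ m, tGen r m i, tGen r a b⁆ = 0 := by
  have hvanish : ∀ m ∈ Finset.univ, m ∉ ({a, b} : Finset (Fin r)) →
      ⁅tGen r m i, tGen r a b⁆ = 0 := by
    intro m _ hm
    simp only [Finset.mem_insert, Finset.mem_singleton, not_or] at hm
    exact lie_tGen_tGen_of_ne hm.1 hm.2 hia hib
  rw [sum_lie, ← Finset.sum_subset (Finset.subset_univ _) hvanish]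
  rcases eq_or_ne a b with rfl | hab
  · have htwo : (2 : ℚ) • ⁅tGen r a i, tGen r a a⁆ = 0 := by
      rw [two_smul, ← add_lie, lie_tGen_add_tGen_tGen]
    simpa using htwo
  · rw [Finset.sum_pair hab, ← add_lie, lie_tGen_add_tGen_tGen]

end

theorem sum_column_bracket_sum_column_sub_general (r : ℕ) (i k : Fin r) (hik : i ≠ k) :
    ⁅∑ m : Fin r, tGen r m i, (∑ m : Fin r, tGen r m k) - tGen r k i⁆ = 0 := by
  have hsum : ⁅∑ m, tGen r m i, ∑ n, tGen r n k⁆ = ⁅∑ m, tGen r m i, tGen r i k⁆ := by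
    rw [lie_sum, Fintype.sum_eq_single i]
    intro n hn
    exact lie_sum_tGen_tGen_of_ne (Ne.symm hn) hik
  rw [lie_sub, hsum, tGen_comm k i, sub_self]

/-- For `i ≠ k`, in `t^R(r)` one has `[Σ_m t_{mi}, Σ_m t_{mk} - t_{ki}] = 0`. -/
theorem sum_column_bracket_sum_column_sub (r : ℕ) (hr : 1 ≤ r) (i k : Fin r) (hik : i ≠ k) :
    ⁅∑ m : Fin r, tGen r m i, (∑ m : Fin r, tGen r m k) - tGen r k i⁆ = 0 :=
  sum_column_bracket_sum_column_sub_general r i k hik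
end

section
/- Fix r ≥ 1 and indices i ≠ j in {1, …, r}. In the exterior algebra ΛV, the induced algebra endomorphism ΛI satisfies ΛI(B_{ij}) = −B_{ij}, i.e. I(u_i)·I(ω_{ij}) + I(ω_{ij})·I(u_j) + I(u_j)·I(u_i) = −(u_i ω_{ij} + ω_{ij} u_j + u_j u_i). -/
/-- Index type for the basis of `V`: vectors `u_i`, `ω_{ij}` (for `i < j`), and `θ_i`. -/
inductive BVIdx (r : ℕ) : Type
  | u : Fin r → BVIdx r
  | om : (i j : Fin r) → i < j → BVIdx r
  | th : Fin r → BVIdx r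

/-- The ℚ-vector space `V` with basis `u_i`, `ω_{ij}` (`i < j`), `θ_i`. -/
abbrev BVSpace (r : ℕ) : Type := BVIdx r →₀ ℚ

/-- The basis vector `u_i`. -/
noncomputable def uVec (r : ℕ) (i : Fin r) : BVSpace r := Finsupp.single (BVIdx.u i) 1

/-- The vector `ω_{ij} = ω_{ji}` (defined for `i ≠ j`; set to `0` when `i = j`). -/
noncomputable def omVec (r : ℕ) (i j : Fin r) : BVSpace r :=
  if h : i < j then Finsupp.single (BVIdx.om i j h) 1
  else if h' : j < i then Finsupp.single (BVIdx.om j i h') 1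
  else 0

/-- The basis vector `θ_i`. -/
noncomputable def thVec (r : ℕ) (i : Fin r) : BVSpace r := Finsupp.single (BVIdx.th i) 1

/-- The linear involution `I : V → V`, with `I(u_i) = -u_i`,
`I(ω_{ij}) = ω_{ij} - u_i - u_j` and `I(θ_i) = θ_i - 2u_i`. -/
noncomputable def IMap (r : ℕ) : BVSpace r →ₗ[ℚ] BVSpace r :=
  Finsupp.lift (BVSpace r) ℚ (BVIdx r) fun b =>
    match b with
    | .u i => -uVec r i
    | .om i j _ => omVec r i j - uVec r i - uVec r j
    | .th i => thVec r i - 2 • uVec r i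

/-- The exterior algebra `ΛV`. -/
abbrev BVExt (r : ℕ) : Type := ExteriorAlgebra ℚ (BVSpace r)

/-- The element `u_i ∈ ΛV`. -/
noncomputable def uE (r : ℕ) (i : Fin r) : BVExt r := ExteriorAlgebra.ι ℚ (uVec r i)

/-- The element `ω_{ij} ∈ ΛV`. -/
noncomputable def omE (r : ℕ) (i j : Fin r) : BVExt r := ExteriorAlgebra.ι ℚ (omVec r i j)

/-- The element `θ_i ∈ ΛV`. -/
noncomputable def thE (r : ℕ) (i : Fin r) : BVExt r := ExteriorAlgebra.ι ℚ (thVec r i)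

/-- The induced algebra endomorphism `ΛI : ΛV → ΛV`. -/
noncomputable def extI (r : ℕ) : BVExt r →ₐ[ℚ] BVExt r := ExteriorAlgebra.map (IMap r)

/-- The Arnold element `A_{ijk} = ω_{ij}ω_{jk} + ω_{jk}ω_{ki} + ω_{ki}ω_{ij}`. -/
noncomputable def ArnoldA (r : ℕ) (i j k : Fin r) : BVExt r :=
  omE r i j * omE r j k + omE r j k * omE r k i + omE r k i * omE r i j

/-- The element `B_{ij} = u_i ω_{ij} + ω_{ij} u_j + u_j u_i`. -/
noncomputable def RelB (r : ℕ) (i j : Fin r) : BVExt r :=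
  uE r i * omE r i j + omE r i j * uE r j + uE r j * uE r i

/-! Substituting `I(u_i) = -u_i`, `I(u_j) = -u_j` and `I(ω_{ij}) = ω_{ij} - u_i - u_j` into
`B_{ij}` and expanding, the squares `u_i²`, `u_j²` vanish and the cross terms add up to
`2 u_i u_j + u_j u_i = -u_j u_i`, since degree-one elements anticommute. -/

namespace ExteriorAlgebra

variable {R M : Type*} [CommRing R] [AddCommGroup M] [Module R M]

theorem ι_mul_ι_swap (x y : M) : ι R y * ι R x = -(ι R x * ι R y) :=
  eq_neg_of_add_eq_zero_left (ι_add_mul_swap y x)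

theorem map_ι_mul_add_eq_neg (f : M →ₗ[R] M) {x y z : M} (hx : f x = -x) (hy : f y = -y)
    (hz : f z = z - x - y) :
    map f (ι R x * ι R z + ι R z * ι R y + ι R y * ι R x) =
      -(ι R x * ι R z + ι R z * ι R y + ι R y * ι R x) := by
  simp only [map_add, map_mul, map_apply_ι, hx, hy, hz, map_sub, map_neg, mul_sub, sub_mul,
    neg_mul, mul_neg, neg_neg, ι_sq_zero, ι_mul_ι_swap x y]
  abel

end ExteriorAlgebra

theorem omVec_comm (r : ℕ) (i j : Fin r) : omVec r i j = omVec r j i := by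
  unfold omVec
  rcases lt_trichotomy i j with h | rfl | h
  · simp [h, h.not_gt]
  · rfl
  · simp [h, h.not_gt]

theorem omVec_of_lt (r : ℕ) {i j : Fin r} (h : i < j) :
    omVec r i j = Finsupp.single (BVIdx.om i j h) 1 :=
  dif_pos h

theorem IMap_uVec (r : ℕ) (i : Fin r) : IMap r (uVec r i) = -uVec r i := by
  simp [IMap, uVec]

theorem IMap_omVec_of_lt (r : ℕ) {i j : Fin r} (h : i < j) :
    IMap r (omVec r i j) = omVec r i j - uVec r i - uVec r j := by
  simp [IMap, omVec_of_lt r h]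

theorem IMap_omVec (r : ℕ) {i j : Fin r} (hij : i ≠ j) :
    IMap r (omVec r i j) = omVec r i j - uVec r i - uVec r j := by
  rcases hij.lt_or_gt with h | h
  · exact IMap_omVec_of_lt r h
  · rw [omVec_comm, IMap_omVec_of_lt r h, sub_right_comm]

theorem extI_RelB_general (r : ℕ) (i j : Fin r) (hij : i ≠ j) :
    extI r (RelB r i j) = -RelB r i j :=
  ExteriorAlgebra.map_ι_mul_add_eq_neg (IMap r) (IMap_uVec r i) (IMap_uVec r j) (IMap_omVec r hij)

/-- For `i ≠ j`, the induced algebra endomorphism `ΛI` satisfies `ΛI(B_{ij}) = -B_{ij}`. -/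
theorem extI_RelB (r : ℕ) (hr : 1 ≤ r) (i j : Fin r) (hij : i ≠ j) :
    extI r (RelB r i j) = -RelB r i j :=
  extI_RelB_general r i j hij
end
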